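/- In the n-player public goods game, the Imitate-If-Better strategy of player j coincides with the Trigger strategy: its cooperation probability satisfies T_j(C | a') = [a'_j = C]·[a'_{-j} = (C,...,C)], i.e., player j cooperates next round iff j cooperated and all other players cooperated in the previous round. -/

import Mathlib

open Finset
open scoped Classical

lemma eraseNonempty {n : ℕ} (hn : 2 ≤ n) (j : Fin n) :
    (Finset.univ.erase j).Nonempty := by
  apply Finset.card_pos.mp
  rw [Finset.card_erase_of_mem (Finset.mem_univ j), Finset.card_univ, Fintype.card_fin]
  omega

/-- Public goods game payoff: `true` = cooperate `C`, `false` = defect `D`. -/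
noncomputable def pgPay (n : ℕ) (c r : ℝ) (j : Fin n) (a : Fin n → Bool) : ℝ :=
  (r * c / n) * ∑ k ∈ Finset.univ.erase j, (if a k then (1 : ℝ) else 0)
    + c * (r / n - 1) * (if a j then 1 else 0)

/-- `G_j(a) = max_{k ≠ j} s_k(a)` in the public goods game. -/
noncomputable def pgG {n : ℕ} (hn : 2 ≤ n) (c r : ℝ) (j : Fin n) (a : Fin n → Bool) : ℝ :=
  (Finset.univ.erase j).sup' (eraseNonempty hn j) (fun k => pgPay n c r k a)

/-- Cooperation probability of the Imitate-If-Better strategy of player `j` in the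
public goods game: if `j` was beaten (`s_j(a') < max_{k≠j} s_k(a')`), imitate a
uniformly chosen best-performing other player (so cooperate with probability equal
to the fraction of cooperators among the argmax), otherwise repeat `a'_j`. -/
noncomputable def iibCoopProb {n : ℕ} (hn : 2 ≤ n) (c r : ℝ) (j : Fin n)
    (a' : Fin n → Bool) : ℝ :=
  if pgPay n c r j a' < pgG hn c r j a' then
    (((Finset.univ.erase j).filter
        (fun k => pgPay n c r k a' = pgG hn c r j a' ∧ a' k = true)).card : ℝ)
      / (((Finset.univ.erase j).filter
        (fun k => pgPay n c r k a' = pgG hn c r j a')).card : ℝ)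
  else if a' j then 1 else 0

lemma pgPay_eq (n : ℕ) (c r : ℝ) (k : Fin n) (a : Fin n → Bool) :
    pgPay n c r k a
      = (r * c / n) * (∑ i, if a i then (1 : ℝ) else 0)
        - c * (if a k then 1 else 0) := by
  unfold pgPay
  rw [← Finset.sum_erase_add _ _ (Finset.mem_univ k)]
  ring

/-- In the public goods game, Imitate-If-Better coincides with the Trigger strategy:
its cooperation probability is `[a'_j = C]·[a'_{-j} = (C,…,C)]`. -/
theorem pg_iib_is_trigger {n : ℕ} (hn : 2 ≤ n) (c r : ℝ)
    (hc : 0 < c) (hr1 : 1 < r) (hrn : r < n) (j : Fin n) (a' : Fin n → Bool) :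
    iibCoopProb hn c r j a'
      = (if a' j then (1 : ℝ) else 0) * (if ∀ k, k ≠ j → a' k = true then 1 else 0) := by
  set S : ℝ := ∑ i, if a' i then (1 : ℝ) else 0 with hS
  have hub : ∀ k : Fin n, pgPay n c r k a' ≤ (r * c / n) * S := by
    intro k
    rw [pgPay_eq]
    have : (0 : ℝ) ≤ c * (if a' k then 1 else 0) := by positivity
    linarith
  have hGub : pgG hn c r j a' ≤ (r * c / n) * S :=
    Finset.sup'_le _ _ (fun k _ => hub k)
  by_cases hj : a' j
  · by_cases hall : ∀ k, k ≠ j → a' k = true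
    · -- everyone cooperates: all payoffs equal, j not beaten, cooperates
      have hGeq : pgG hn c r j a' = pgPay n c r j a' := by
        apply le_antisymm
        · apply Finset.sup'_le
          intro k hk
          rw [pgPay_eq, pgPay_eq, hall k (Finset.ne_of_mem_erase hk), hj]
        · obtain ⟨k, hk⟩ := eraseNonempty hn j
          refine le_trans (le_of_eq ?_) (Finset.le_sup' _ hk)
          rw [pgPay_eq, pgPay_eq, hall k (Finset.ne_of_mem_erase hk), hj]
      simp only [iibCoopProb, hGeq, lt_self_iff_false, if_false, hj, if_true]
      rw [if_pos (fun k hk => hall k hk)]; norm_num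
    · -- some other defects: j beaten, argmax are defectors, prob 0
      push_neg at hall
      obtain ⟨k0, hk0j, hk0⟩ := hall
      have hk0mem : k0 ∈ Finset.univ.erase j := Finset.mem_erase.mpr ⟨hk0j, Finset.mem_univ k0⟩
      have hk0pay : pgPay n c r k0 a' = (r * c / n) * S := by
        rw [pgPay_eq, if_neg hk0]
        ring
      have hGeq : pgG hn c r j a' = (r * c / n) * S := by
        refine le_antisymm hGub ?_
        rw [← hk0pay]
        exact Finset.le_sup' (fun k => pgPay n c r k a') hk0mem
      have hbeat : pgPay n c r j a' < pgG hn c r j a' := by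
        rw [hGeq, pgPay_eq, hj]
        simp only [if_true]
        linarith
      have hfilter : ((Finset.univ.erase j).filter
          (fun k => pgPay n c r k a' = pgG hn c r j a' ∧ a' k = true)) = ∅ := by
        apply Finset.filter_false_of_mem
        intro k hk
        rintro ⟨hpay, hck⟩
        rw [pgPay_eq, hck, hGeq] at hpay
        simp only [if_true] at hpay
        linarith
      have hallfalse : ¬ ∀ k, k ≠ j → a' k = true := fun h => by
        rw [h k0 hk0j] at hk0; exact hk0 rfl
      simp [iibCoopProb, hbeat, hfilter, hj, hallfalse]
  · -- j defects: payoff is maximal, not beaten, repeats D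
    have hnb : ¬ pgPay n c r j a' < pgG hn c r j a' := by
      rw [pgPay_eq, if_neg hj]
      push_neg
      linarith [hGub]
    simp [iibCoopProb, hnb, hj]
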